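/- arXiv:1506.05222 — 2 statements merged into one kernel-verified Lean document; each statement's English description precedes it below -/
import Mathlib

section
/- In the no-outage case, the intensity measure of the NLOS path-loss process is Λ_NLOS([0,x)) = πλκ^{-2}·x^{2/β} − K·(1 − e^{−Q·x^{1/β}} − Q·x^{1/β}·e^{−Q·x^{1/β}}); that is, 2πλ ∫_0^∞ 1{x > (κr)^β}·(1 − γ·e^{−δr})·r dr equals this expression for all x ≥ 0, where K = 2πλγ/δ² and Q = δ/κ. -/
open Real MeasureTheory

/-!
Since `r ↦ (κ r)^β` is increasing, the indicator `1{x > (κ r)^β}` cuts the integral down to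
`r < R := x^{1/β}/κ`. On `[0, R]` the integrand `(1 - γ e^{-δr}) r` has the elementary
antiderivative `r²/2 + (γ/δ) r e^{-δr} + (γ/δ²) e^{-δr}`, and substituting `R` back gives the
stated closed form.
-/

lemma mul_rpow_lt_iff_lt_rpow_one_div_div {κ β x r : ℝ} (hκ : 0 < κ) (hβ : 0 < β) (hx : 0 ≤ x)
    (hr : 0 ≤ r) : (κ * r) ^ β < x ↔ r < x ^ (1 / β) / κ := by
  rw [lt_div_iff₀ hκ, mul_comm r, one_div, lt_rpow_inv_iff_of_pos (by positivity) hx hβ]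

lemma setIntegral_Ioi_ite_lt_eq_intervalIntegral {E : Type*} [NormedAddCommGroup E]
    [NormedSpace ℝ E] (f : ℝ → E) {R : ℝ} (hR : 0 ≤ R) :
    ∫ r in Set.Ioi 0, (if r < R then f r else 0) = ∫ r in 0..R, f r := by
  rw [intervalIntegral.integral_of_le hR, integral_Ioc_eq_integral_Ioo, ← Set.Ioi_inter_Iio,
    ← setIntegral_indicator measurableSet_Iio]
  rfl

lemma hasDerivAt_nlos_primitive {γ δ : ℝ} (hδ : δ ≠ 0) (r : ℝ) :
    HasDerivAt
      (fun r => r ^ 2 / 2 + γ / δ * (r * exp (-δ * r)) + γ / δ ^ 2 * exp (-δ * r))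
      ((1 - γ * exp (-δ * r)) * r) r := by
  have hexp : HasDerivAt (fun r => exp (-δ * r)) (exp (-δ * r) * -δ) r :=
    ((hasDerivAt_id r).const_mul (-δ)).exp.congr_deriv (by simp)
  refine ((((hasDerivAt_pow 2 r).div_const 2).add
    (((hasDerivAt_id' r).mul hexp).const_mul (γ / δ))).add
      (hexp.const_mul (γ / δ ^ 2))).congr_deriv ?_
  field_simp
  ring

lemma integral_one_sub_mul_exp_neg_mul_mul_self {γ δ : ℝ} (hδ : δ ≠ 0) (R : ℝ) :
    ∫ r in 0..R, (1 - γ * exp (-δ * r)) * r =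
      R ^ 2 / 2 - γ / δ ^ 2 * (1 - exp (-δ * R) - δ * R * exp (-δ * R)) := by
  rw [intervalIntegral.integral_eq_sub_of_hasDerivAt (fun r _ => hasDerivAt_nlos_primitive hδ r)
    ((by fun_prop : Continuous fun r => (1 - γ * exp (-δ * r)) * r).intervalIntegrable 0 R)]
  field_simp
  simp only [mul_zero, neg_zero, exp_zero]
  ring

theorem intensity_NLOS_no_outage_general (κ β lam δ γ : ℝ) (hκ : 0 < κ) (hβ : 1 ≤ β)
    (hδ : 0 < δ) :
    ∀ x ≥ (0 : ℝ),
      2 * π * lam *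
          ∫ r in Set.Ioi (0 : ℝ),
            (if x > (κ * r) ^ β then (1 - γ * Real.exp (-δ * r)) * r else 0) =
        π * lam * κ ^ (-2 : ℝ) * x ^ (2 / β) -
          (2 * π * lam * γ / δ ^ 2) *
            (1 - Real.exp (-(δ / κ) * x ^ (1 / β))
              - (δ / κ) * x ^ (1 / β) * Real.exp (-(δ / κ) * x ^ (1 / β))) := by
  intro x hx
  have hβ0 : 0 < β := one_pos.trans_le hβ
  set R := x ^ (1 / β) / κ with hR
  have hR0 : 0 ≤ R := by positivity
  have hcut : ∫ r in Set.Ioi (0 : ℝ),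
      (if x > (κ * r) ^ β then (1 - γ * exp (-δ * r)) * r else 0) =
        ∫ r in Set.Ioi (0 : ℝ), (if r < R then (1 - γ * exp (-δ * r)) * r else 0) :=
    setIntegral_congr_fun measurableSet_Ioi fun r hr =>
      if_congr (mul_rpow_lt_iff_lt_rpow_one_div_div hκ hβ0 hx (le_of_lt hr)) rfl rfl
  have hR2 : κ ^ (-2 : ℝ) * x ^ (2 / β) = R ^ 2 := by
    rw [hR, div_pow, ← rpow_natCast (x ^ (1 / β)), ← rpow_mul hx, rpow_neg hκ.le,
      show (2 : ℝ) = ((2 : ℕ) : ℝ) by norm_num, rpow_natCast]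
    field_simp
  rw [hcut, setIntegral_Ioi_ite_lt_eq_intervalIntegral _ hR0,
    integral_one_sub_mul_exp_neg_mul_mul_self hδ.ne', mul_assoc (π * lam), hR2,
    show -(δ / κ) * x ^ (1 / β) = -δ * R by rw [hR]; ring,
    show δ / κ * x ^ (1 / β) = δ * R by rw [hR]; ring]
  ring

theorem intensity_NLOS_no_outage (κ β lam δ γ : ℝ) (hκ : 0 < κ) (hβ : 1 ≤ β)
    (hlam : 0 < lam) (hδ : 0 < δ) (hγ0 : 0 ≤ γ) (hγ1 : γ ≤ 1) :
    ∀ x ≥ (0 : ℝ),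
      2 * π * lam *
          ∫ r in Set.Ioi (0 : ℝ),
            (if x > (κ * r) ^ β then (1 - γ * Real.exp (-δ * r)) * r else 0) =
        π * lam * κ ^ (-2 : ℝ) * x ^ (2 / β) -
          (2 * π * lam * γ / δ ^ 2) *
            (1 - Real.exp (-(δ / κ) * x ^ (1 / β))
              - (δ / κ) * x ^ (1 / β) * Real.exp (-(δ / κ) * x ^ (1 / β))) :=
  intensity_NLOS_no_outage_general κ β lam δ γ hκ hβ hδ
end

section
/- The function x ↦ Λ(x) := Λ_LOS(x) + Λ_NLOS(x), with Λ_LOS(x) = K·(1 − e^{−Q_L·x^{1/β_L}} − Q_L·x^{1/β_L}·e^{−Q_L·x^{1/β_L}}) and Λ_NLOS(x) = πλκ_N^{-2}·x^{2/β_N} − K·(1 − e^{−Q_N·x^{1/β_N}} − Q_N·x^{1/β_N}·e^{−Q_N·x^{1/β_N}}), is nonnegative, nondecreasing on [0, ∞), satisfies Λ(0) = 0, and tends to ∞ as x → ∞. -/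
/-!
Write `G(t) = 1 - e^{-t} - t e^{-t}`, so that `G'(t) = t e^{-t}`, and `c = π λ / δ²`. Then
`K = 2γc` and, with `u = Q_N x^{1/β_N}`, the first term of `Λ_NLOS(x)` is `c u²`, so
`Λ(x) = K G(Q_L x^{1/β_L}) + c (u² - 2γ G(u))`. Both `G` and `u ↦ u² - 2γ G(u)` (derivative
`2u (1 - γ e^{-u}) ≥ 0` as `γ ≤ 1`) are nondecreasing on `[0, ∞)` and vanish at `0`, which
gives nonnegativity, monotonicity and `Λ(0) = 0`. Since `0 ≤ G ≤ 1`,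
`Λ(x) ≥ π λ κ_N^{-2} x^{2/β_N} - K → ∞`.
-/

open Real Filter

/-- The CDF of the Gamma(2, 1) distribution. -/
noncomputable def erlangTwoCDF (t : ℝ) : ℝ := 1 - exp (-t) - t * exp (-t)

lemma hasDerivAt_erlangTwoCDF (t : ℝ) : HasDerivAt erlangTwoCDF (t * exp (-t)) t := by
  have hexp : HasDerivAt (fun t => exp (-t)) (-exp (-t)) t := by
    simpa using (hasDerivAt_neg t).exp
  exact (((hasDerivAt_const t 1).sub hexp).sub ((hasDerivAt_id' t).mul hexp)).congr_deriv (by ring)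

@[fun_prop]
lemma continuous_erlangTwoCDF : Continuous erlangTwoCDF := by
  unfold erlangTwoCDF
  fun_prop

@[simp]
lemma erlangTwoCDF_zero : erlangTwoCDF 0 = 0 := by
  simp [erlangTwoCDF]

lemma erlangTwoCDF_le_one {t : ℝ} (ht : -1 ≤ t) : erlangTwoCDF t ≤ 1 := by
  have : 0 ≤ (1 + t) * exp (-t) := mul_nonneg (by linarith) (exp_pos _).le
  unfold erlangTwoCDF
  linarith

lemma monotoneOn_Ici_of_hasDerivAt_nonneg {f f' : ℝ → ℝ} (hf : Continuous f)
    (hderiv : ∀ x, HasDerivAt f (f' x) x) (hnonneg : ∀ x, 0 < x → 0 ≤ f' x) :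
    MonotoneOn f (Set.Ici 0) :=
  monotoneOn_of_hasDerivWithinAt_nonneg (convex_Ici 0) hf.continuousOn
    (fun x _ => (hderiv x).hasDerivWithinAt) (fun x hx => hnonneg x (by simpa using hx))

lemma monotoneOn_erlangTwoCDF : MonotoneOn erlangTwoCDF (Set.Ici 0) :=
  monotoneOn_Ici_of_hasDerivAt_nonneg continuous_erlangTwoCDF hasDerivAt_erlangTwoCDF
    fun x hx => by positivity

lemma erlangTwoCDF_nonneg {t : ℝ} (ht : 0 ≤ t) : 0 ≤ erlangTwoCDF t := by
  simpa using monotoneOn_erlangTwoCDF Set.self_mem_Ici (Set.mem_Ici.2 ht) ht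

lemma monotoneOn_sq_sub_mul_erlangTwoCDF {γ : ℝ} (hγ : γ ≤ 1) :
    MonotoneOn (fun t => t ^ 2 - 2 * γ * erlangTwoCDF t) (Set.Ici 0) := by
  refine monotoneOn_Ici_of_hasDerivAt_nonneg (by fun_prop)
    (fun t => ((hasDerivAt_pow 2 t).sub ((hasDerivAt_erlangTwoCDF t).const_mul (2 * γ))))
    fun t ht => ?_
  have : γ * exp (-t) ≤ 1 := by
    rcases le_total γ 0 with hγ0 | hγ0
    · nlinarith [exp_pos (-t)]
    · nlinarith [exp_le_one_iff.2 (neg_nonpos.2 ht.le)]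
  push_cast
  nlinarith

lemma mul_rpow_neg_two_mul_rpow_two_div {a δ κ β x : ℝ} (hδ : δ ≠ 0) (hκ : 0 ≤ κ)
    (hx : 0 ≤ x) :
    a * κ ^ (-2 : ℝ) * x ^ (2 / β) = a / δ ^ 2 * (δ / κ * x ^ (1 / β)) ^ 2 := by
  have hsq : x ^ (2 / β) = (x ^ (1 / β)) ^ 2 := by
    rw [← rpow_mul_natCast hx]
    ring_nf
  rw [hsq, rpow_neg hκ, rpow_two]
  field_simp

lemma MonotoneOn.comp_const_mul_rpow {f : ℝ → ℝ} (hf : MonotoneOn f (Set.Ici 0)) {Q p : ℝ}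
    (hQ : 0 ≤ Q) (hp : 0 ≤ p) : MonotoneOn (fun x => f (Q * x ^ p)) (Set.Ici 0) :=
  hf.comp (fun _ hx _ hy hxy => mul_le_mul_of_nonneg_left
      (monotoneOn_rpow_Ici_of_exponent_nonneg hp hx hy hxy) hQ)
    fun _ hx => Set.mem_Ici.2 (mul_nonneg hQ (rpow_nonneg hx _))

lemma MonotoneOn.const_mul_of_nonneg {f : ℝ → ℝ} {s : Set ℝ} (hf : MonotoneOn f s) {c : ℝ}
    (hc : 0 ≤ c) : MonotoneOn (fun x => c * f x) s :=
  fun _ hx _ hy hxy => mul_le_mul_of_nonneg_left (hf hx hy hxy) hc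

theorem total_intensity_properties
    (lam δ γ κL κN βL βN : ℝ)
    (hlam : 0 < lam) (hδ : 0 < δ) (hγ0 : 0 ≤ γ) (hγ1 : γ ≤ 1)
    (hκL : 0 < κL) (hκN : 0 < κN) (hβL : 1 ≤ βL) (hβN : 1 ≤ βN)
    (K QL QN : ℝ) (hK : K = 2 * π * lam * γ / δ ^ 2)
    (hQL : QL = δ / κL) (hQN : QN = δ / κN)
    (ΛLOS ΛNLOS Λ : ℝ → ℝ)
    (hL : ∀ x, ΛLOS x = K * (1 - Real.exp (-QL * x ^ (1 / βL))
        - QL * x ^ (1 / βL) * Real.exp (-QL * x ^ (1 / βL))))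
    (hN : ∀ x, ΛNLOS x = π * lam * κN ^ (-2 : ℝ) * x ^ (2 / βN)
        - K * (1 - Real.exp (-QN * x ^ (1 / βN))
          - QN * x ^ (1 / βN) * Real.exp (-QN * x ^ (1 / βN))))
    (hΛ : ∀ x, Λ x = ΛLOS x + ΛNLOS x) :
    (∀ x ≥ (0 : ℝ), 0 ≤ Λ x) ∧ MonotoneOn Λ (Set.Ici 0) ∧ Λ 0 = 0 ∧
      Tendsto Λ atTop atTop := by
  set c := π * lam / δ ^ 2
  have hKc : K = c * (2 * γ) := by rw [hK]; ring
  have hK0 : 0 ≤ K := by rw [hKc]; positivity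
  have hQL0 : 0 ≤ QL := by rw [hQL]; positivity
  have hQN0 : 0 ≤ QN := by rw [hQN]; positivity
  have hLOS x : ΛLOS x = K * erlangTwoCDF (QL * x ^ (1 / βL)) := by
    rw [hL, erlangTwoCDF, neg_mul]
  have hNLOS x : ΛNLOS x = π * lam * κN ^ (-2 : ℝ) * x ^ (2 / βN)
      - K * erlangTwoCDF (QN * x ^ (1 / βN)) := by
    rw [hN, erlangTwoCDF, neg_mul]
  have hΛ_eq : Set.EqOn Λ (fun x => K * erlangTwoCDF (QL * x ^ (1 / βL)) +
      c * ((QN * x ^ (1 / βN)) ^ 2 - 2 * γ * erlangTwoCDF (QN * x ^ (1 / βN)))) (Set.Ici 0) :=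
    fun x hx => by
      rw [hΛ, hLOS, hNLOS, mul_rpow_neg_two_mul_rpow_two_div hδ.ne' hκN.le hx, hKc, hQN]
      ring
  have hmono : MonotoneOn Λ (Set.Ici 0) := by
    refine MonotoneOn.congr ?_ hΛ_eq.symm
    exact ((monotoneOn_erlangTwoCDF.comp_const_mul_rpow hQL0 (by positivity))
      |>.const_mul_of_nonneg hK0).add (((monotoneOn_sq_sub_mul_erlangTwoCDF hγ1)
      |>.comp_const_mul_rpow hQN0 (by positivity)).const_mul_of_nonneg (by positivity))
  have hzero : Λ 0 = 0 := by
    have h0 {β : ℝ} (hβ : 1 ≤ β) : (0 : ℝ) ^ β⁻¹ = 0 := zero_rpow (by positivity)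
    simp [hΛ_eq Set.self_mem_Ici, h0 hβL, h0 hβN]
  refine ⟨fun x hx => hzero ▸ hmono Set.self_mem_Ici hx hx, hmono, hzero, ?_⟩
  refine tendsto_atTop_mono' atTop ?_ (tendsto_atTop_add_const_right atTop (-K)
    ((tendsto_rpow_atTop (by positivity : 0 < 2 / βN)).const_mul_atTop
      (by positivity : 0 < π * lam * κN ^ (-2 : ℝ))))
  filter_upwards [eventually_ge_atTop 0] with x hx
  have hLOS_nonneg :=
    mul_nonneg hK0 (erlangTwoCDF_nonneg (by positivity : 0 ≤ QL * x ^ (1 / βL)))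
  have hNLOS_le := mul_le_of_le_one_right hK0 (erlangTwoCDF_le_one (t := QN * x ^ (1 / βN))
    (by linarith [show 0 ≤ QN * x ^ (1 / βN) by positivity]))
  rw [hΛ, hLOS, hNLOS]
  linarith
end
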